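/- Let G be block-decomposable and let o be a node with exactly three outgoing edges and exactly one incoming edge, such that the node p at the other end of the incoming edge has degree at least 2 in G. Then in every block decomposition of G one of the following holds: (i) the incoming edge and one of the outgoing edges belong to a common triangle block containing o, and the remaining two outgoing edges form an outfork block with outlet o; or (ii) the incoming edge and two of the outgoing edges belong to a common diamond block with o as one of its outlets, and the remaining outgoing edge is a spike block. In particular, the incoming edge never belongs to a fork, square, or spike block. -/

import Mathlib

/-- The six block shapes: spike, triangle, infork, outfork, diamond, square. -/
inductive BlockShape : Type
  | spike | triangle | infork | outfork | diamond | square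
  deriving DecidableEq

namespace BlockShape

/-- Number of nodes of each block shape. -/
def numNodes : BlockShape → ℕ
  | spike => 2
  | triangle => 3
  | infork => 3
  | outfork => 3
  | diamond => 4
  | square => 5

/-- The directed edges of each block shape.
For the spike the nodes are `x = 0, y = 1` with edge `x → y`.
For the triangle the nodes are `0, 1, 2` with edges `0 → 1 → 2 → 0`.
For the infork the nodes are `x = 0, y = 1, c = 2` with edges `x → c`, `y → c`.
For the outfork the nodes are `x = 0, y = 1, c = 2` with edges `c → x`, `c → y`.
For the diamond the nodes are `p = 0, q = 1, x = 2, y = 3` with boundary edges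
`p → x, x → q, q → y, y → p` and mid-edge `q → p`.
For the square the nodes are the center `c = 0` and corners `v1 = 1, …, v4 = 4`, with
edges `v1 → v2 → v3 → v4 → v1`, `c → v1`, `v2 → c`, `c → v3`, `v4 → c`. -/
def edges : (s : BlockShape) → List (Fin s.numNodes × Fin s.numNodes)
  | spike => ([(0, 1)] : List (Fin 2 × Fin 2))
  | triangle => ([(0, 1), (1, 2), (2, 0)] : List (Fin 3 × Fin 3))
  | infork => ([(0, 2), (1, 2)] : List (Fin 3 × Fin 3))
  | outfork => ([(2, 0), (2, 1)] : List (Fin 3 × Fin 3))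
  | diamond => ([(0, 2), (2, 1), (1, 3), (3, 0), (1, 0)] : List (Fin 4 × Fin 4))
  | square => ([(1, 2), (2, 3), (3, 4), (4, 1), (0, 1), (2, 0), (0, 3), (4, 0)] :
      List (Fin 5 × Fin 5))

/-- The outlets (white nodes) of each block shape. -/
def IsOutlet : (s : BlockShape) → Fin s.numNodes → Prop
  | spike, _ => True
  | triangle, _ => True
  | infork, i => (i : ℕ) = 2
  | outfork, i => (i : ℕ) = 2
  | diamond, i => (i : ℕ) = 0 ∨ (i : ℕ) = 1
  | square, i => (i : ℕ) = 0

/-- The degree of a node inside its block (number of incident edges). -/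
def blockDeg (s : BlockShape) (i : Fin s.numNodes) : ℕ :=
  s.edges.countP fun e => decide (e.1 = i) || decide (e.2 = i)

end BlockShape

/-- A directed multigraph on a vertex type `V` is given by its edge multiplicity
function `G : V → V → ℕ`.  It is a directed graph in our sense if it has no loops
and no 2-cycles. -/
def IsDiGraph {V : Type} (G : V → V → ℕ) : Prop :=
  (∀ v, G v v = 0) ∧ ∀ x y, G x y = 0 ∨ G y x = 0

/-- Degree of a node: the number of incident edges counted with multiplicity. -/
def degree {V : Type} [Fintype V] (G : V → V → ℕ) (v : V) : ℕ :=
  ∑ w, (G v w + G w v)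

/-- Two nodes are adjacent if some edge joins them (in either direction). -/
def Adj {V : Type} (G : V → V → ℕ) (x y : V) : Prop := 0 < G x y + G y x

/-- `Reach G x y` : `y` lies in the connected component of `x`. -/
def Reach {V : Type} (G : V → V → ℕ) : V → V → Prop := Relation.ReflTransGen (Adj G)

/-- The connected component of a node, as a finset. -/
noncomputable def component {V : Type} [Fintype V] (G : V → V → ℕ) (v : V) : Finset V :=
  letI := Classical.decPred fun w => Reach G v w
  Finset.univ.filter (Reach G v)

/-- Total number of block edges mapped onto the ordered pair `(x, y)` by the gluing data. -/
def blockMult {V : Type} [DecidableEq V] (n : ℕ) (shape : Fin n → BlockShape)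
    (emb : (b : Fin n) → Fin (shape b).numNodes → V) (x y : V) : ℕ :=
  ∑ b : Fin n, (shape b).edges.countP fun e => decide (emb b e.1 = x ∧ emb b e.2 = y)

/-- A block decomposition of the directed multigraph `G` : a finite collection of blocks
together with an identification of their nodes with the nodes of `G` such that
* each block is embedded injectively,
* nodes of two distinct blocks may be identified only if both are outlets,
* each outlet is identified with at most one other outlet (no vertex lies in three blocks),
* every vertex of `G` comes from some block, and
* the multiplicity of each edge of `G` is the number of block edges giving it minus the
  number of block edges giving the reversed edge (two parallel edges with the same
  direction are kept as a double edge; two parallel edges with opposite directions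
  annihilate each other). -/
structure BlockDecomposition {V : Type} [Fintype V] [DecidableEq V] (G : V → V → ℕ) :
    Type where
  n : ℕ
  shape : Fin n → BlockShape
  emb : (b : Fin n) → Fin (shape b).numNodes → V
  emb_inj : ∀ b, Function.Injective (emb b)
  glue_outlets : ∀ (b c : Fin n) (i : Fin (shape b).numNodes) (j : Fin (shape c).numNodes),
    emb b i = emb c j → b ≠ c → (shape b).IsOutlet i ∧ (shape c).IsOutlet j
  atMostTwo : ∀ (b c d : Fin n) (i : Fin (shape b).numNodes) (j : Fin (shape c).numNodes)
    (k : Fin (shape d).numNodes), emb b i = emb c j → emb b i = emb d k →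
    b = c ∨ b = d ∨ c = d
  covers : ∀ v : V, ∃ b i, emb b i = v
  edge_eq : ∀ x y : V, G x y = blockMult n shape emb x y - blockMult n shape emb y x

/-- The number of block edges of a decomposition lying over the ordered pair `(x, y)`. -/
def BlockDecomposition.mult {V : Type} [Fintype V] [DecidableEq V] {G : V → V → ℕ}
    (D : BlockDecomposition G) : V → V → ℕ :=
  blockMult D.n D.shape D.emb

/-- A graph is (block-)decomposable if it admits a block decomposition. -/
def Decomposable {V : Type} [Fintype V] [DecidableEq V] (G : V → V → ℕ) : Prop :=
  Nonempty (BlockDecomposition G)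

/-- The edge `e` of block `b` is annihilated in the decomposition `D` : some edge of
another block lies over the same pair of vertices with the opposite direction. -/
def BlockDecomposition.EdgeAnnihilated {V : Type} [Fintype V] [DecidableEq V]
    {G : V → V → ℕ} (D : BlockDecomposition G) (b : Fin D.n)
    (e : Fin (D.shape b).numNodes × Fin (D.shape b).numNodes) : Prop :=
  e ∈ (D.shape b).edges ∧
    ∃ (c : Fin D.n) (f : Fin (D.shape c).numNodes × Fin (D.shape c).numNodes),
      c ≠ b ∧ f ∈ (D.shape c).edges ∧ D.emb c f.1 = D.emb b e.2 ∧ D.emb c f.2 = D.emb b e.1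

/-!
At `o` the block edges over-count the edges of `G` by the number `M` of annihilated pairs, so
the blocks carry `3 + M` edges out of `o` and `1 + M` into it. A block has out-degree at most 2
at any node, so `o` lies in exactly two blocks, as an outlet of both, and `M ≤ 1`. A finite check
over pairs of outlets shows that no annihilated pair can sit at `o` when the degrees are `4` and
`2`, so `M = 0`, and that out-degree `3` and in-degree `1` at two glued outlets occur only for a
triangle with an outfork or for the outlet `q` of a diamond with the tail of a spike. The block
carrying the edge `p → o` is the one with an incoming edge at `o`, i.e. the triangle or diamond.
-/

namespace BlockShape

instance : Fintype BlockShape where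
  elems := ⟨[spike, triangle, infork, outfork, diamond, square], by decide⟩
  complete := fun s => by cases s <;> decide

instance instDecidableIsOutlet : (s : BlockShape) → DecidablePred s.IsOutlet
  | spike, _ => .isTrue trivial
  | triangle, _ => .isTrue trivial
  | infork, i => inferInstanceAs (Decidable ((i : ℕ) = 2))
  | outfork, i => inferInstanceAs (Decidable ((i : ℕ) = 2))
  | diamond, i => inferInstanceAs (Decidable ((i : ℕ) = 0 ∨ (i : ℕ) = 1))
  | square, i => inferInstanceAs (Decidable ((i : ℕ) = 0))

def outDeg (s : BlockShape) (i : Fin s.numNodes) : ℕ :=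
  s.edges.countP fun e => decide (e.1 = i)

def inDeg (s : BlockShape) (i : Fin s.numNodes) : ℕ :=
  s.edges.countP fun e => decide (e.2 = i)

theorem outDeg_le_two : ∀ (s : BlockShape) (i : Fin s.numNodes), s.outDeg i ≤ 2 := by
  decide

theorem swap_notMem_edges : ∀ (s : BlockShape), ∀ e ∈ s.edges, e.swap ∉ s.edges := by
  decide

theorem exists_mem_edges_fst_eq_of_outDeg_pos {s : BlockShape} {i : Fin s.numNodes}
    (h : 0 < s.outDeg i) : ∃ e ∈ s.edges, e.1 = i := by
  simpa using List.countP_pos_iff.mp h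

theorem inDeg_pos_of_mem_edges {s : BlockShape} {e : Fin s.numNodes × Fin s.numNodes}
    (he : e ∈ s.edges) : 0 < s.inDeg e.2 :=
  List.countP_pos_iff.mpr ⟨e, he, by simp⟩

set_option synthInstance.maxSize 2000 in
set_option maxHeartbeats 1000000 in
/-- Out-degree `4` at two outlets forces two nodes of out-degree 2 (outfork or square centre,
outlet `q` of a diamond); of their out-neighbours only the outlet `p` of a diamond is an outlet,
and no in-neighbour of such a node is one. -/
theorem not_isOutlet_and_isOutlet_of_outDeg_add_eq_four :
    ∀ (s : BlockShape) (i : Fin s.numNodes) (s' : BlockShape) (i' : Fin s'.numNodes),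
    s.IsOutlet i → s'.IsOutlet i' → s.outDeg i + s'.outDeg i' = 4 →
    s.inDeg i + s'.inDeg i' = 2 → ∀ e ∈ s.edges, ∀ f ∈ s'.edges, e.1 = i → f.2 = i' →
    ¬(s.IsOutlet e.2 ∧ s'.IsOutlet f.1) := by
  decide

set_option synthInstance.maxSize 2000 in
set_option maxHeartbeats 1000000 in
theorem triangle_outfork_or_diamond_spike_of_degrees :
    ∀ (s : BlockShape) (i : Fin s.numNodes) (s' : BlockShape) (i' : Fin s'.numNodes),
    s.IsOutlet i → s'.IsOutlet i' → s.outDeg i + s'.outDeg i' = 3 →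
    s.inDeg i + s'.inDeg i' = 1 → 0 < s.inDeg i →
    (s = triangle ∧ s' = outfork ∧ (i' : ℕ) = 2) ∨
    (s = diamond ∧ (i : ℕ) = 1 ∧ s' = spike ∧ (i' : ℕ) = 0) := by
  decide

end BlockShape

theorem List.sum_countP_and_eq {α β : Type} [Fintype β] [DecidableEq β] (l : List α)
    (P : α → Prop) [DecidablePred P] (f : α → β) :
    ∑ y, l.countP (fun a => decide (P a ∧ f a = y)) = l.countP fun a => decide (P a) := by
  induction l with
  | nil => simp
  | cons a l ih =>
    simp only [List.countP_cons, Finset.sum_add_distrib, ih]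
    by_cases hPa : P a <;> simp [hPa]

namespace BlockDecomposition

open BlockShape

variable {V : Type} [Fintype V] [DecidableEq V] {G : V → V → ℕ} (D : BlockDecomposition G)

def outDegAt (b : Fin D.n) (v : V) : ℕ :=
  (D.shape b).edges.countP fun e => decide (D.emb b e.1 = v)

def inDegAt (b : Fin D.n) (v : V) : ℕ :=
  (D.shape b).edges.countP fun e => decide (D.emb b e.2 = v)

/-- The number of pairs of block edges at `v` that annihilate each other. -/
def numAnnihilatedAt (v : V) : ℕ :=
  ∑ w, min (D.mult v w) (D.mult w v)

theorem sum_mult_left (v : V) : ∑ w, D.mult v w = ∑ b, D.outDegAt b v := by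
  unfold mult blockMult
  rw [Finset.sum_comm]
  exact Finset.sum_congr rfl fun b _ => List.sum_countP_and_eq _ _ _

theorem sum_mult_right (v : V) : ∑ w, D.mult w v = ∑ b, D.inDegAt b v := by
  unfold mult blockMult
  rw [Finset.sum_comm]
  refine Finset.sum_congr rfl fun b _ => ?_
  refine .trans ?_ <|
    List.sum_countP_and_eq (D.shape b).edges (fun e => D.emb b e.2 = v) fun e => D.emb b e.1
  exact Finset.sum_congr rfl fun w _ => List.countP_congr fun e _ => by simp [and_comm]

theorem sum_mult_left_eq_add (v : V) :
    ∑ w, D.mult v w = ∑ w, G v w + D.numAnnihilatedAt v := by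
  rw [numAnnihilatedAt, ← Finset.sum_add_distrib]
  refine Finset.sum_congr rfl fun w _ => ?_
  have := D.edge_eq v w
  have := D.edge_eq w v
  simp only [mult] at *
  omega

theorem sum_mult_right_eq_add (v : V) :
    ∑ w, D.mult w v = ∑ w, G w v + D.numAnnihilatedAt v := by
  rw [numAnnihilatedAt, ← Finset.sum_add_distrib]
  refine Finset.sum_congr rfl fun w _ => ?_
  have := D.edge_eq v w
  have := D.edge_eq w v
  simp only [mult] at *
  omega

theorem mult_pos_of_pos {x y : V} (h : 0 < G x y) : 0 < D.mult x y := by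
  have := D.edge_eq x y
  simp only [mult] at *
  omega

theorem exists_mem_edges_of_mult_pos {x y : V} (h : 0 < D.mult x y) :
    ∃ b, ∃ e ∈ (D.shape b).edges, D.emb b e.1 = x ∧ D.emb b e.2 = y := by
  unfold mult blockMult at h
  obtain ⟨b, -, hb⟩ := Finset.exists_ne_zero_of_sum_ne_zero h.ne'
  obtain ⟨e, he, hxy⟩ := List.countP_pos_iff.mp (Nat.pos_of_ne_zero hb)
  exact ⟨b, e, he, by simpa using hxy⟩

theorem outDegAt_of_emb_eq {b : Fin D.n} {i : Fin (D.shape b).numNodes} {v : V}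
    (h : D.emb b i = v) : D.outDegAt b v = (D.shape b).outDeg i :=
  List.countP_congr fun e _ => by
    simpa only [decide_eq_true_eq, ← h] using (D.emb_inj b).eq_iff

theorem inDegAt_of_emb_eq {b : Fin D.n} {i : Fin (D.shape b).numNodes} {v : V}
    (h : D.emb b i = v) : D.inDegAt b v = (D.shape b).inDeg i :=
  List.countP_congr fun e _ => by
    simpa only [decide_eq_true_eq, ← h] using (D.emb_inj b).eq_iff

theorem outDegAt_eq_zero {b : Fin D.n} {v : V} (h : ∀ i, D.emb b i ≠ v) :
    D.outDegAt b v = 0 :=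
  List.countP_eq_zero.mpr fun e _ => by simpa using h e.1

theorem inDegAt_eq_zero {b : Fin D.n} {v : V} (h : ∀ i, D.emb b i ≠ v) :
    D.inDegAt b v = 0 :=
  List.countP_eq_zero.mpr fun e _ => by simpa using h e.2

section TwoBlocks

variable {D} {c c' : Fin D.n} {i : Fin (D.shape c).numNodes} {i' : Fin (D.shape c').numNodes}
  {v : V}

theorem eq_or_eq_of_emb_eq (hcc' : c ≠ c') (hi : D.emb c i = v) (hi' : D.emb c' i' = v)
    {b : Fin D.n} {j : Fin (D.shape b).numNodes} (hj : D.emb b j = v) : b = c ∨ b = c' := by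
  rcases D.atMostTwo c c' b i i' j (hi.trans hi'.symm) (hi.trans hj.symm) with h | h | h
  · exact absurd h hcc'
  · exact .inl h.symm
  · exact .inr h.symm

theorem sum_mult_left_of_emb_eq (hcc' : c ≠ c') (hi : D.emb c i = v) (hi' : D.emb c' i' = v) :
    ∑ w, D.mult v w = (D.shape c).outDeg i + (D.shape c').outDeg i' := by
  rw [sum_mult_left, Fintype.sum_eq_add c c' hcc', D.outDegAt_of_emb_eq hi,
    D.outDegAt_of_emb_eq hi']
  refine fun b hb => D.outDegAt_eq_zero fun j hj => ?_
  rcases eq_or_eq_of_emb_eq hcc' hi hi' hj with h | h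
  exacts [hb.1 h, hb.2 h]

theorem sum_mult_right_of_emb_eq (hcc' : c ≠ c') (hi : D.emb c i = v) (hi' : D.emb c' i' = v) :
    ∑ w, D.mult w v = (D.shape c).inDeg i + (D.shape c').inDeg i' := by
  rw [sum_mult_right, Fintype.sum_eq_add c c' hcc', D.inDegAt_of_emb_eq hi,
    D.inDegAt_of_emb_eq hi']
  refine fun b hb => D.inDegAt_eq_zero fun j hj => ?_
  rcases eq_or_eq_of_emb_eq hcc' hi hi' hj with h | h
  exacts [hb.1 h, hb.2 h]

theorem isOutlet_of_emb_eq (hcc' : c ≠ c') (hi : D.emb c i = v) (hi' : D.emb c' i' = v) :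
    (D.shape c).IsOutlet i ∧ (D.shape c').IsOutlet i' :=
  D.glue_outlets c c' i i' (hi.trans hi'.symm) hcc'

theorem exists_ne_emb_eq_of_three_le (hi : D.emb c i = v) (h3 : 3 ≤ ∑ w, D.mult v w) :
    ∃ c' : Fin D.n, ∃ i' : Fin (D.shape c').numNodes, c' ≠ c ∧ D.emb c' i' = v := by
  by_contra! hc
  have hsum : ∑ w, D.mult v w = (D.shape c).outDeg i := by
    rw [sum_mult_left, Fintype.sum_eq_single c fun b hb => D.outDegAt_eq_zero (hc b · hb),
      D.outDegAt_of_emb_eq hi]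
  have := outDeg_le_two _ i
  omega

theorem min_mult_eq_zero (hcc' : c ≠ c') (hi : D.emb c i = v) (hi' : D.emb c' i' = v)
    (hout : (D.shape c).outDeg i + (D.shape c').outDeg i' = 4)
    (hin : (D.shape c).inDeg i + (D.shape c').inDeg i' = 2) (w : V) :
    min (D.mult v w) (D.mult w v) = 0 := by
  by_contra hne
  obtain ⟨b, e, he, he₁, he₂⟩ := D.exists_mem_edges_of_mult_pos (by omega : 0 < D.mult v w)
  obtain ⟨d, f, hf, hf₁, hf₂⟩ := D.exists_mem_edges_of_mult_pos (by omega : 0 < D.mult w v)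
  have hbd : b ≠ d := by
    rintro rfl
    refine swap_notMem_edges _ e he ?_
    convert hf using 1
    exact Prod.ext (D.emb_inj b (he₂.trans hf₁.symm)) (D.emb_inj b (he₁.trans hf₂.symm))
  have hout' : (D.shape b).outDeg e.1 + (D.shape d).outDeg f.2 = 4 := by
    rw [← sum_mult_left_of_emb_eq hbd he₁ hf₂, sum_mult_left_of_emb_eq hcc' hi hi', hout]
  have hin' : (D.shape b).inDeg e.1 + (D.shape d).inDeg f.2 = 2 := by
    rw [← sum_mult_right_of_emb_eq hbd he₁ hf₂, sum_mult_right_of_emb_eq hcc' hi hi', hin]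
  obtain ⟨ho, ho'⟩ := isOutlet_of_emb_eq hbd he₁ hf₂
  exact not_isOutlet_and_isOutlet_of_outDeg_add_eq_four _ _ _ _ ho ho' hout' hin' e he f hf rfl
    rfl (isOutlet_of_emb_eq hbd (he₂.trans hf₁.symm) rfl)

theorem numAnnihilatedAt_eq_zero_of_out_three (hcc' : c ≠ c') (hi : D.emb c i = v)
    (hi' : D.emb c' i' = v) (hout : ∑ w, G v w = 3) (hin : ∑ w, G w v = 1) :
    D.numAnnihilatedAt v = 0 := by
  have hM := sum_mult_left_eq_add D v
  have hN := sum_mult_right_eq_add D v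
  rw [sum_mult_left_of_emb_eq hcc' hi hi'] at hM
  rw [sum_mult_right_of_emb_eq hcc' hi hi'] at hN
  have := outDeg_le_two _ i
  have := outDeg_le_two _ i'
  by_contra hne
  obtain ⟨w, -, hw⟩ := Finset.exists_ne_zero_of_sum_ne_zero hne
  exact hw (min_mult_eq_zero hcc' hi hi' (by omega) (by omega) w)

theorem eq_of_mem_edges_of_inDeg_eq_zero (hcc' : c ≠ c') (hi : D.emb c i = v)
    (hi' : D.emb c' i' = v) (hin' : (D.shape c').inDeg i' = 0) {b : Fin D.n}
    {f : Fin (D.shape b).numNodes × Fin (D.shape b).numNodes} (hf : f ∈ (D.shape b).edges)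
    (hfv : D.emb b f.2 = v) : b = c := by
  rcases eq_or_eq_of_emb_eq hcc' hi hi' hfv with rfl | rfl
  · rfl
  · have := inDeg_pos_of_mem_edges hf
    rw [D.emb_inj b (hfv.trans hi'.symm)] at this
    omega

end TwoBlocks

end BlockDecomposition

theorem stmt_19_general {V : Type} [Fintype V] [DecidableEq V] (G : V → V → ℕ)
    (o p : V)
    (hout : (∑ w, G o w) = 3) (hin : (∑ w, G w o) = 1)
    (hp : G p o = 1) :
    ∀ D : BlockDecomposition G,
      (∀ (b : Fin D.n) (e : Fin (D.shape b).numNodes × Fin (D.shape b).numNodes),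
        e ∈ (D.shape b).edges → D.emb b e.1 = p → D.emb b e.2 = o →
        D.shape b ≠ BlockShape.infork ∧ D.shape b ≠ BlockShape.outfork ∧
        D.shape b ≠ BlockShape.square ∧ D.shape b ≠ BlockShape.spike) ∧
      ((∃ b : Fin D.n, D.shape b = BlockShape.triangle ∧
          (∃ e ∈ (D.shape b).edges, D.emb b e.1 = p ∧ D.emb b e.2 = o) ∧
          (∃ e ∈ (D.shape b).edges, D.emb b e.1 = o) ∧
          (∃ b' : Fin D.n, b' ≠ b ∧ D.shape b' = BlockShape.outfork ∧
            ∃ i, D.emb b' i = o ∧ (i : ℕ) = 2)) ∨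
       (∃ b : Fin D.n, D.shape b = BlockShape.diamond ∧
          (∃ e ∈ (D.shape b).edges, D.emb b e.1 = p ∧ D.emb b e.2 = o) ∧
          (∃ i, D.emb b i = o ∧ ((i : ℕ) = 0 ∨ (i : ℕ) = 1)) ∧
          (∃ b' : Fin D.n, b' ≠ b ∧ D.shape b' = BlockShape.spike ∧
            ∃ j, D.emb b' j = o ∧ (j : ℕ) = 0))) := by
  open BlockShape BlockDecomposition in
  intro D
  obtain ⟨c, e, he, hep, heo⟩ :=
    D.exists_mem_edges_of_mult_pos (D.mult_pos_of_pos (hp ▸ one_pos))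
  obtain ⟨c', i', hc'c, hi'⟩ :=
    exists_ne_emb_eq_of_three_le heo (by rw [sum_mult_left_eq_add]; omega)
  have hcc' := hc'c.symm
  have hM := numAnnihilatedAt_eq_zero_of_out_three hcc' heo hi' hout hin
  have hsout := sum_mult_left_eq_add D o
  have hsin := sum_mult_right_eq_add D o
  rw [sum_mult_left_of_emb_eq hcc' heo hi', hM, hout] at hsout
  rw [sum_mult_right_of_emb_eq hcc' heo hi', hM, hin] at hsin
  have hin_pos := inDeg_pos_of_mem_edges he
  obtain ⟨ho, ho'⟩ := isOutlet_of_emb_eq hcc' heo hi'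
  have hshape := triangle_outfork_or_diamond_spike_of_degrees _ _ _ _ ho ho' hsout hsin hin_pos
  refine ⟨fun b f hf _ hfo => ?_, ?_⟩
  · obtain rfl := eq_of_mem_edges_of_inDeg_eq_zero hcc' heo hi' (by omega) hf hfo
    rcases hshape with ⟨hs, -⟩ | ⟨hs, -⟩ <;> simp [hs]
  rcases hshape with ⟨hs, hs', hi'₂⟩ | ⟨hs, hq, hs', hi'₀⟩
  · obtain ⟨f, hf, hfo⟩ := exists_mem_edges_fst_eq_of_outDeg_pos
      (by have := outDeg_le_two _ i'; omega : 0 < (D.shape c).outDeg e.2)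
    exact .inl ⟨c, hs, ⟨e, he, hep, heo⟩, ⟨f, hf, by rw [hfo, heo]⟩,
      c', hc'c, hs', i', hi', hi'₂⟩
  · exact .inr ⟨c, hs, ⟨e, he, hep, heo⟩, ⟨e.2, heo, .inr hq⟩,
      c', hc'c, hs', i', hi', hi'₀⟩

/-- let `o` be a node of a block-decomposable graph with exactly three
outgoing edges and exactly one incoming edge, coming from a node `p` of degree at
least 2.  Then in every block decomposition either (i) the incoming edge and one of
the outgoing edges lie in a common triangle block containing `o` and the remaining two
outgoing edges form an outfork block with outlet `o`, or (ii) the incoming edge and two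
of the outgoing edges lie in a common diamond block with `o` as one of its outlets and
the remaining outgoing edge is a spike block.  In particular the incoming edge never
lies in a fork, square or spike block. -/
theorem stmt_19 {V : Type} [Fintype V] [DecidableEq V] (G : V → V → ℕ)
    (hG : IsDiGraph G) (o p : V)
    (hout : (∑ w, G o w) = 3) (hin : (∑ w, G w o) = 1)
    (hp : G p o = 1) (hpdeg : 2 ≤ degree G p) :
    ∀ D : BlockDecomposition G,
      (∀ (b : Fin D.n) (e : Fin (D.shape b).numNodes × Fin (D.shape b).numNodes),
        e ∈ (D.shape b).edges → D.emb b e.1 = p → D.emb b e.2 = o →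
        D.shape b ≠ BlockShape.infork ∧ D.shape b ≠ BlockShape.outfork ∧
        D.shape b ≠ BlockShape.square ∧ D.shape b ≠ BlockShape.spike) ∧
      ((∃ b : Fin D.n, D.shape b = BlockShape.triangle ∧
          (∃ e ∈ (D.shape b).edges, D.emb b e.1 = p ∧ D.emb b e.2 = o) ∧
          (∃ e ∈ (D.shape b).edges, D.emb b e.1 = o) ∧
          (∃ b' : Fin D.n, b' ≠ b ∧ D.shape b' = BlockShape.outfork ∧
            ∃ i, D.emb b' i = o ∧ (i : ℕ) = 2)) ∨
       (∃ b : Fin D.n, D.shape b = BlockShape.diamond ∧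
          (∃ e ∈ (D.shape b).edges, D.emb b e.1 = p ∧ D.emb b e.2 = o) ∧
          (∃ i, D.emb b i = o ∧ ((i : ℕ) = 0 ∨ (i : ℕ) = 1)) ∧
          (∃ b' : Fin D.n, b' ≠ b ∧ D.shape b' = BlockShape.spike ∧
            ∃ j, D.emb b' j = o ∧ (j : ℕ) = 0))) :=
  stmt_19_general G o p hout hin hp
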